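/- In a finite directed graph with a source node s and sink node w, if a 0/1 arc selection y satisfies flow conservation at every task vertex (in-degree equals out-degree in the selected arcs), every task vertex has in-degree at most 1 in the selected arcs, the selected arcs contain no directed cycle among task vertices, and the out-flow at the source is at most K, then the selected arcs decompose into at most K arc-disjoint directed paths from s to w, and these paths cover pairwise disjoint sets of task vertices. -/

import Mathlib

set_option linter.unusedSectionVars false

namespace RouteAux
open List

variable {V : Type*} [DecidableEq V]

lemma zip_of_chain' {R : V → V → Prop} : ∀ (l : List V), l.Chain' R →
    ∀ p ∈ l.zip l.tail, R p.1 p.2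
  | [], _, p, hp => by simp at hp
  | [a], _, p, hp => by simp at hp
  | a :: b :: t, h, p, hp => by
    simp only [List.Chain', List.isChain_cons_cons] at h
    simp only [List.tail_cons, List.zip_cons_cons, List.mem_cons] at hp
    rcases hp with rfl | hp
    · exact h.1
    · exact zip_of_chain' (b :: t) h.2 p hp

lemma mem_of_mem_zip {p : V × V} {l : List V} (hp : p ∈ l.zip l.tail) :
    p.1 ∈ l ∧ p.2 ∈ l := by
  obtain ⟨h1, h2⟩ := List.of_mem_zip (a := p.1) (b := p.2) (by simpa using hp)
  exact ⟨h1, List.mem_of_mem_tail h2⟩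

lemma exists_succ_zip {l : List V} {v w' : V} : v ∈ l → l.getLast? = some w' → v ≠ w' →
    ∃ u, (v, u) ∈ l.zip l.tail := by
  induction l with
  | nil => intro h; simp at h
  | cons a t ih =>
    intro hv hlast hne
    cases t with
    | nil =>
      simp at hv hlast
      exact absurd (hv ▸ hlast ▸ rfl) hne
    | cons b t' =>
      rcases List.mem_cons.1 hv with rfl | hv'
      · exact ⟨b, by simp⟩
      · obtain ⟨u, hu⟩ := ih hv' (by rwa [List.getLast?_cons_cons] at hlast) hne
        exact ⟨u, by simp only [List.tail_cons, List.zip_cons_cons, List.mem_cons]; right; exact hu⟩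

lemma exists_pred_zip {l : List V} {v : V} : ∀ {s' : V}, v ∈ l → l.head? = some s' → v ≠ s' →
    ∃ u, (u, v) ∈ l.zip l.tail := by
  induction l with
  | nil => intro s' h; simp at h
  | cons a t ih =>
    intro s' hv hhead hne
    simp only [List.head?_cons, Option.some.injEq] at hhead
    subst hhead
    rcases List.mem_cons.1 hv with rfl | hv'
    · exact absurd rfl hne
    cases t with
    | nil => simp at hv'
    | cons b t' =>
      by_cases hb : v = b
      · subst hb; exact ⟨a, by simp⟩
      · obtain ⟨u, hu⟩ := ih hv' (by simp) hb
        exact ⟨u, by simp only [List.tail_cons, List.zip_cons_cons, List.mem_cons]; right; exact hu⟩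

lemma zip_src_inj : ∀ (l : List V), l.Nodup → ∀ x y z : V,
    (x, y) ∈ l.zip l.tail → (x, z) ∈ l.zip l.tail → y = z
  | [], _, x, y, z, h, _ => by simp at h
  | [a], _, x, y, z, h, _ => by simp at h
  | a :: b :: t, hnd, x, y, z, hy, hz => by
    simp only [List.tail_cons, List.zip_cons_cons, List.mem_cons, Prod.mk.injEq] at hy hz
    rcases hy with ⟨rfl, rfl⟩ | hy
    · rcases hz with ⟨h1, rfl⟩ | hz
      · rfl
      · exact absurd (mem_of_mem_zip (p := (x, z)) hz).1 (List.nodup_cons.1 hnd).1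
    · rcases hz with ⟨rfl, rfl⟩ | hz
      · exact absurd (mem_of_mem_zip (p := (x, y)) hy).1 (List.nodup_cons.1 hnd).1
      · exact zip_src_inj (b :: t) (List.nodup_cons.1 hnd).2 x y z hy hz

lemma pred_of_getLast {R : V → V → Prop} : ∀ (l : List V), l.Chain' R → ∀ (h : l ≠ []),
    2 ≤ l.length → ∃ u ∈ l, R u (l.getLast h)
  | [], _, h, _ => absurd rfl h
  | [a], _, _, hl => by simp at hl
  | a :: b :: t, hc, _, _ => by
    simp only [List.Chain', List.isChain_cons_cons] at hc
    cases t with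
    | nil => exact ⟨a, by simp, by simpa using hc.1⟩
    | cons c t' =>
      obtain ⟨u, hu, hR⟩ := pred_of_getLast (b :: c :: t') hc.2 (by simp) (by simp)
      refine ⟨u, List.mem_cons_of_mem _ hu, ?_⟩
      rwa [List.getLast_cons (by simp)]

lemma length_ge_two {l : List V} {x y : V} (hh : l.head? = some x) (hl : l.getLast? = some y)
    (hne : x ≠ y) : 2 ≤ l.length := by
  cases l with
  | nil => simp at hh
  | cons a t =>
    cases t with
    | nil =>
      simp at hh hl
      exact absurd (hh ▸ hl) hne
    | cons b t' => simp

lemma getLast?_eq_head?_of_length_le_one {l : List V} (h : l.length ≤ 1) :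
    l.getLast? = l.head? := by
  cases l with
  | nil => rfl
  | cons a t =>
    cases t with
    | nil => rfl
    | cons b t' => simp at h

lemma chain_nodup {sel₀ : Finset (V × V)} {s₀ w₀ : V}
    (h1 : ∀ a ∈ sel₀, a.2 ≠ s₀) (h2 : ∀ a ∈ sel₀, a.1 ≠ w₀)
    (hnc : ¬ ∃ (k : ℕ) (f : ℕ → V), 1 ≤ k ∧ f 0 = f k ∧
      (∀ i ≤ k, f i ≠ s₀ ∧ f i ≠ w₀) ∧ ∀ i < k, (f i, f (i + 1)) ∈ sel₀)
    (l : List V) (hc : l.Chain' (fun u v => (u, v) ∈ sel₀)) : l.Nodup := by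
  by_contra hnd
  rw [List.nodup_iff_injective_get] at hnd
  simp only [Function.Injective] at hnd
  push_neg at hnd
  obtain ⟨i, j, hij, hne⟩ := hnd
  wlog hlt : (i : ℕ) < (j : ℕ) generalizing i j
  · exact this j i hij.symm (Ne.symm hne)
      (by have : (i : ℕ) ≠ (j : ℕ) := fun h => hne (Fin.ext h); omega)
  set k := (j : ℕ) - (i : ℕ) with hk
  have hk1 : 1 ≤ k := by omega
  have hjl : (j : ℕ) < l.length := j.2
  have hbound : ∀ m, (i : ℕ) + min m k < l.length := by
    intro m
    have : (i : ℕ) + min m k ≤ (j : ℕ) := by omega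
    omega
  set f : ℕ → V := fun m => l.get ⟨(i : ℕ) + min m k, hbound m⟩ with hf
  have harc : ∀ m < k, (f m, f (m + 1)) ∈ sel₀ := by
    intro m hm
    have hg := List.isChain_iff_getElem.1 hc ((i : ℕ) + m) (by omega)
    have e1 : f m = l.get ⟨(i : ℕ) + m, by omega⟩ := by
      simp only [hf]; congr 1; exact Fin.ext (by simp; omega)
    have e2 : f (m + 1) = l.get ⟨(i : ℕ) + m + 1, by omega⟩ := by
      simp only [hf]; congr 1; exact Fin.ext (by simp; omega)
    rw [e1, e2]; exact hg
  have hf0 : f 0 = f k := by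
    simp only [hf]
    have : l.get i = l.get j := hij
    convert this using 2
    · exact Fin.ext (by simp)
    · exact Fin.ext (by simp; omega)
  refine hnc ⟨k, f, hk1, hf0, ?_, harc⟩
  intro m hm
  constructor
  · rcases Nat.eq_zero_or_pos m with rfl | hpos
    · rw [hf0]
      have := harc (k - 1) (by omega)
      have e : k - 1 + 1 = k := by omega
      rw [e] at this
      exact h1 _ this
    · have := harc (m - 1) (by omega)
      have e : m - 1 + 1 = m := by omega
      rw [e] at this
      exact h1 _ this
  · rcases Nat.lt_or_ge m k with hmk | hmk
    · exact h2 _ (harc m hmk)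
    · have hmk' : m = k := by omega
      rw [hmk', ← hf0]
      exact h2 _ (harc 0 (by omega))

variable [Fintype V]

noncomputable def build (sel₀ : Finset (V × V)) : ℕ → V → List V
  | 0, v => [v]
  | (n+1), v =>
    if h : ∃ u, (v, u) ∈ sel₀ then v :: build sel₀ n h.choose else [v]

lemma build_succ (sel₀ : Finset (V × V)) (n : ℕ) (v : V) :
    build sel₀ (n+1) v =
      if h : ∃ u, (v, u) ∈ sel₀ then v :: build sel₀ n h.choose else [v] := rfl

lemma build_ne_nil (sel₀ : Finset (V × V)) : ∀ n v, build sel₀ n v ≠ []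
  | 0, v => by simp [build]
  | (n+1), v => by rw [build_succ]; split <;> simp

lemma build_head (sel₀ : Finset (V × V)) : ∀ n v, (build sel₀ n v).head? = some v
  | 0, v => by simp [build]
  | (n+1), v => by rw [build_succ]; split <;> simp

lemma build_chain (sel₀ : Finset (V × V)) : ∀ n v,
    (build sel₀ n v).Chain' (fun u x => (u, x) ∈ sel₀)
  | 0, v => by simp [build]; exact List.isChain_singleton v
  | (n+1), v => by
    rw [build_succ]
    split
    · rename_i h
      simp only [List.Chain', List.isChain_cons]
      refine ⟨?_, build_chain sel₀ n h.choose⟩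
      intro y hy
      rw [build_head sel₀ n h.choose] at hy
      cases hy
      exact h.choose_spec
    · exact List.isChain_singleton v

lemma getLast?_cons_of_ne_nil {a : V} {M : List V} (h : M ≠ []) :
    (a :: M).getLast? = M.getLast? := by
  cases M with
  | nil => exact absurd rfl h
  | cons b t => exact List.getLast?_cons_cons

lemma build_stuck (sel₀ : Finset (V × V)) : ∀ n v,
    (build sel₀ n v).length = n + 1 ∨
      ∃ y, (build sel₀ n v).getLast? = some y ∧ ∀ u, (y, u) ∉ sel₀
  | 0, v => Or.inl (by simp [build])
  | (n+1), v => by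
    by_cases h : ∃ u, (v, u) ∈ sel₀
    · have hb : build sel₀ (n+1) v = v :: build sel₀ n h.choose := by
        rw [build_succ, dif_pos h]
      rcases build_stuck sel₀ n h.choose with hl | ⟨y, hy, hstk⟩
      · left; rw [hb]; simp [hl]
      · right
        exact ⟨y, by rw [hb, getLast?_cons_of_ne_nil (build_ne_nil _ _ _)]; exact hy, hstk⟩
    · have hb : build sel₀ (n+1) v = [v] := by rw [build_succ, dif_neg h]
      right
      push_neg at h
      exact ⟨v, by rw [hb]; rfl, h⟩

/-- From any vertex with an in-arc, the greedy walk reaches the sink. -/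
lemma reach {sel₀ : Finset (V × V)} {s₀ w₀ : V}
    (h1 : ∀ a ∈ sel₀, a.2 ≠ s₀) (h2 : ∀ a ∈ sel₀, a.1 ≠ w₀)
    (hnc : ¬ ∃ (k : ℕ) (f : ℕ → V), 1 ≤ k ∧ f 0 = f k ∧
      (∀ i ≤ k, f i ≠ s₀ ∧ f i ≠ w₀) ∧ ∀ i < k, (f i, f (i + 1)) ∈ sel₀)
    (hfl : ∀ t, t ≠ s₀ → t ≠ w₀ →
      (sel₀.filter (fun a => a.2 = t)).card = (sel₀.filter (fun a => a.1 = t)).card)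
    (v p : V) (hp : (p, v) ∈ sel₀) :
    ∃ l : List V, l.head? = some v ∧ l.getLast? = some w₀ ∧
      l.Chain' (fun u x => (u, x) ∈ sel₀) ∧ l.Nodup := by
  set l := build sel₀ (Fintype.card V) v with hl
  have hchain : l.Chain' (fun u x => (u, x) ∈ sel₀) := build_chain sel₀ (Fintype.card V) v
  have hnodup := chain_nodup h1 h2 hnc l hchain
  have hnn : l ≠ [] := build_ne_nil _ _ _
  have hhead : l.head? = some v := build_head _ _ _
  obtain ⟨y, hy, hstuck⟩ : ∃ y, l.getLast? = some y ∧ ∀ u, (y, u) ∉ sel₀ := by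
    rcases build_stuck sel₀ (Fintype.card V) v with hfull | hs
    · exfalso
      have := hnodup.length_le_card
      rw [← hl] at hfull
      omega
    · exact hs
  have hyl : y = l.getLast hnn := by
    rw [List.getLast?_eq_getLast hnn] at hy
    exact (Option.some.inj hy).symm
  have hlast_in : ∃ q, (q, y) ∈ sel₀ := by
    rcases Nat.lt_or_ge l.length 2 with h2' | h2'
    · have hyv : y = v := by
        rw [getLast?_eq_head?_of_length_le_one (by omega), hhead] at hy
        exact (Option.some.inj hy).symm
      exact ⟨p, by rwa [hyv]⟩
    · obtain ⟨u, _, hu⟩ := pred_of_getLast l hchain hnn h2'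
      exact ⟨u, by rwa [hyl]⟩
  have hlw : y = w₀ := by
    by_contra hne
    obtain ⟨q, hq⟩ := hlast_in
    have hns : y ≠ s₀ := h1 _ hq
    have hin : 0 < (sel₀.filter (fun a => a.2 = y)).card := by
      rw [Finset.card_pos]
      exact ⟨(q, y), Finset.mem_filter.2 ⟨hq, rfl⟩⟩
    rw [hfl _ hns hne, Finset.card_pos] at hin
    obtain ⟨⟨a1, a2⟩, ha⟩ := hin
    rw [Finset.mem_filter] at ha
    exact hstuck a2 (by rw [← ha.2]; exact ha.1)
  exact ⟨l, hhead, hlw ▸ hy, hchain, hnodup⟩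



lemma main_aux (s w : V) (hsw : s ≠ w) (A : Finset (V × V))
    (hs_in : ∀ a ∈ A, a.2 ≠ s) (hw_out : ∀ a ∈ A, a.1 ≠ w) :
    ∀ N : ℕ, ∀ (sel : Finset (V × V)) (K : ℕ), sel.card ≤ N → sel ⊆ A →
    (∀ t : V, t ≠ s → t ≠ w →
      (sel.filter (fun a => a.2 = t)).card = (sel.filter (fun a => a.1 = t)).card) →
    (∀ t : V, t ≠ s → t ≠ w → (sel.filter (fun a => a.2 = t)).card ≤ 1) →
    (¬ ∃ (k : ℕ) (f : ℕ → V), 1 ≤ k ∧ f 0 = f k ∧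
      (∀ i ≤ k, f i ≠ s ∧ f i ≠ w) ∧ ∀ i < k, (f i, f (i + 1)) ∈ sel) →
    ((sel.filter (fun a => a.1 = s)).card ≤ K) →
    ∃ (n : ℕ) (P : Fin n → List V), n ≤ K ∧
      (∀ i, (P i).head? = some s ∧ (P i).getLast? = some w ∧
        (P i).Chain' (fun u v => (u, v) ∈ sel)) ∧
      (∀ a ∈ sel, ∃ i, a ∈ (P i).zip (P i).tail) ∧
      (∀ i j, i ≠ j → ∀ a ∈ (P i).zip (P i).tail, a ∉ (P j).zip (P j).tail) ∧
      (∀ i j, i ≠ j → ∀ v, v ≠ s → v ≠ w → v ∈ P i → v ∉ P j) := by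
  intro N
  induction N with
  | zero =>
    intro sel K hcard hselA hflow hindeg hnocycle hK
    have hempty : sel = ∅ := Finset.card_eq_zero.1 (Nat.le_zero.1 hcard)
    refine ⟨0, fun _ => [], Nat.zero_le _, fun i => i.elim0, ?_, fun i => i.elim0,
      fun i => i.elim0⟩
    intro a ha
    rw [hempty] at ha
    exact absurd ha (Finset.notMem_empty a)
  | succ N ih =>
    intro sel K hcard hselA hflow hindeg hnocycle hK
    by_cases hempty : sel = ∅
    · refine ⟨0, fun _ => [], Nat.zero_le _, fun i => i.elim0, ?_, fun i => i.elim0,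
        fun i => i.elim0⟩
      intro a ha
      rw [hempty] at ha
      exact absurd ha (Finset.notMem_empty a)
    obtain ⟨⟨u0, v0⟩, ha0⟩ := Finset.nonempty_iff_ne_empty.2 hempty
    have hs_in' : ∀ a ∈ sel, a.2 ≠ s := fun a ha => hs_in a (hselA ha)
    have hw_out' : ∀ a ∈ sel, a.1 ≠ w := fun a ha => hw_out a (hselA ha)
    -- Step 1 : find an out-arc at the source
    have hst0 : ∃ t0, (s, t0) ∈ sel := by
      by_cases hu0 : u0 = s
      · exact ⟨v0, hu0 ▸ ha0⟩
      · set rsel := sel.image Prod.swap with hrsel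
        have mem_rsel : ∀ x y : V, (x, y) ∈ rsel ↔ (y, x) ∈ sel := by
          intro x y
          constructor
          · intro h
            obtain ⟨⟨p1, p2⟩, hp, he⟩ := Finset.mem_image.1 h
            obtain ⟨rfl, rfl⟩ : p2 = x ∧ p1 = y := by
              simpa [Prod.ext_iff, Prod.swap] using he
            exact hp
          · intro h
            exact Finset.mem_image.2 ⟨(y, x), h, rfl⟩
        have h1r : ∀ a ∈ rsel, a.2 ≠ w := by
          rintro ⟨x, y⟩ h
          exact hw_out' _ ((mem_rsel x y).1 h)
        have h2r : ∀ a ∈ rsel, a.1 ≠ s := by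
          rintro ⟨x, y⟩ h
          exact hs_in' _ ((mem_rsel x y).1 h)
        have hncr : ¬ ∃ (k : ℕ) (f : ℕ → V), 1 ≤ k ∧ f 0 = f k ∧
            (∀ i ≤ k, f i ≠ w ∧ f i ≠ s) ∧ ∀ i < k, (f i, f (i + 1)) ∈ rsel := by
          rintro ⟨k, f, hk, hf0, hint, harc⟩
          refine hnocycle ⟨k, fun m => f (k - m), hk, ?_, ?_, ?_⟩
          · simp only [Nat.sub_zero, Nat.sub_self]
            exact hf0.symm
          · intro i hi
            show f (k - i) ≠ s ∧ f (k - i) ≠ w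
            exact ⟨(hint (k - i) (by omega)).2, (hint (k - i) (by omega)).1⟩
          · intro i hi
            show (f (k - i), f (k - (i + 1))) ∈ sel
            have h := harc (k - i - 1) (by omega)
            rw [mem_rsel] at h
            have e : k - i - 1 + 1 = k - i := by omega
            rw [e] at h
            have e2 : k - (i + 1) = k - i - 1 := by omega
            rw [e2]
            exact h
        have hflr : ∀ t, t ≠ w → t ≠ s →
            (rsel.filter (fun a => a.2 = t)).card = (rsel.filter (fun a => a.1 = t)).card := by
          intro t htw hts
          have e1 : rsel.filter (fun a => a.2 = t) =
              (sel.filter (fun a => a.1 = t)).image Prod.swap := by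
            ext ⟨x, y⟩
            constructor
            · intro h
              rw [Finset.mem_filter] at h
              exact Finset.mem_image.2 ⟨(y, x),
                Finset.mem_filter.2 ⟨(mem_rsel x y).1 h.1, h.2⟩, rfl⟩
            · intro h
              obtain ⟨⟨p1, p2⟩, hp, he⟩ := Finset.mem_image.1 h
              rw [Finset.mem_filter] at hp
              obtain ⟨rfl, rfl⟩ : p2 = x ∧ p1 = y := by
                simpa [Prod.ext_iff, Prod.swap] using he
              exact Finset.mem_filter.2 ⟨(mem_rsel p2 p1).2 hp.1, hp.2⟩
          have e2 : rsel.filter (fun a => a.1 = t) =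
              (sel.filter (fun a => a.2 = t)).image Prod.swap := by
            ext ⟨x, y⟩
            constructor
            · intro h
              rw [Finset.mem_filter] at h
              exact Finset.mem_image.2 ⟨(y, x),
                Finset.mem_filter.2 ⟨(mem_rsel x y).1 h.1, h.2⟩, rfl⟩
            · intro h
              obtain ⟨⟨p1, p2⟩, hp, he⟩ := Finset.mem_image.1 h
              rw [Finset.mem_filter] at hp
              obtain ⟨rfl, rfl⟩ : p2 = x ∧ p1 = y := by
                simpa [Prod.ext_iff, Prod.swap] using he
              exact Finset.mem_filter.2 ⟨(mem_rsel p2 p1).2 hp.1, hp.2⟩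
          rw [e1, e2, Finset.card_image_of_injective _ Prod.swap_injective,
            Finset.card_image_of_injective _ Prod.swap_injective]
          exact (hflow t hts htw).symm
        have hpr : (v0, u0) ∈ rsel := (mem_rsel v0 u0).2 ha0
        obtain ⟨l', hh', hl', hc', hn'⟩ := reach h1r h2r hncr hflr u0 v0 hpr
        have hlen2 : 2 ≤ l'.length := length_ge_two hh' hl' hu0
        have hnn' : l' ≠ [] := by intro h; rw [h] at hh'; simp at hh'
        obtain ⟨q, hqmem, hq⟩ := pred_of_getLast l' hc' hnn' hlen2
        have hgl : l'.getLast hnn' = s := by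
          rw [List.getLast?_eq_getLast hnn'] at hl'
          exact Option.some.inj hl'
        rw [hgl] at hq
        exact ⟨q, (mem_rsel q s).1 hq⟩
    obtain ⟨t0, hst0⟩ := hst0
    -- Step 2 : forward path from the source
    obtain ⟨l, hlh, hll, hlc, hln⟩ := reach hs_in' hw_out' hnocycle hflow t0 s hst0
    have hlnn : l ≠ [] := by intro h; rw [h] at hlh; simp at hlh
    set L : List V := s :: l with hL
    have hLc : L.Chain' (fun u v => (u, v) ∈ sel) := by
      rw [hL]; simp only [List.Chain', List.isChain_cons]
      exact ⟨fun y hy => by rw [hlh] at hy; cases hy; exact hst0, hlc⟩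
    have hLn : L.Nodup := chain_nodup hs_in' hw_out' hnocycle L hLc
    have hLh : L.head? = some s := rfl
    have hLl : L.getLast? = some w := by rw [hL, getLast?_cons_of_ne_nil hlnn]; exact hll
    obtain ⟨t1, ht1⟩ := exists_succ_zip (l := L) (List.mem_cons_self (a := s) (l := l)) hLl hsw
    set PA := (L.zip L.tail).toFinset with hPA
    have hPAsub : PA ⊆ sel := by
      rintro ⟨p1, p2⟩ hp
      exact zip_of_chain' L hLc (p1, p2) (List.mem_toFinset.1 hp)
    set sel' := sel \ PA with hsel'
    have hsub : sel' ⊆ sel := Finset.sdiff_subset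
    -- interior vertices of L have no incident arcs in sel'
    have hint_out : ∀ v', v' ∈ L → v' ≠ s → v' ≠ w → ∀ b, (v', b) ∉ sel' := by
      intro v' hvL hvs hvw b hb
      obtain ⟨nx, hnx⟩ := exists_succ_zip hvL hLl hvw
      rw [hsel', Finset.mem_sdiff] at hb
      have hout1 : (sel.filter (fun a => a.1 = v')).card ≤ 1 := by
        rw [← hflow v' hvs hvw]; exact hindeg v' hvs hvw
      have h1 : (v', b) ∈ sel.filter (fun a => a.1 = v') := Finset.mem_filter.2 ⟨hb.1, rfl⟩
      have h2 : (v', nx) ∈ sel.filter (fun a => a.1 = v') :=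
        Finset.mem_filter.2 ⟨hPAsub (List.mem_toFinset.2 hnx), rfl⟩
      have heq := Finset.card_le_one.1 hout1 _ h1 _ h2
      have hbnx : b = nx := by simpa using heq
      exact hb.2 (List.mem_toFinset.2 (hbnx ▸ hnx))
    have hint_in : ∀ v', v' ∈ L → v' ≠ s → v' ≠ w → ∀ b, (b, v') ∉ sel' := by
      intro v' hvL hvs hvw b hb
      obtain ⟨pv, hpv⟩ := exists_pred_zip hvL hLh hvs
      rw [hsel', Finset.mem_sdiff] at hb
      have h1 : (b, v') ∈ sel.filter (fun a => a.2 = v') := Finset.mem_filter.2 ⟨hb.1, rfl⟩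
      have h2 : (pv, v') ∈ sel.filter (fun a => a.2 = v') :=
        Finset.mem_filter.2 ⟨hPAsub (List.mem_toFinset.2 hpv), rfl⟩
      have heq := Finset.card_le_one.1 (hindeg v' hvs hvw) _ h1 _ h2
      have hbpv : b = pv := by simpa using heq
      exact hb.2 (List.mem_toFinset.2 (hbpv ▸ hpv))
    -- vertices not on L keep their arcs
    have huntouched_in : ∀ t, t ∉ L →
        sel'.filter (fun a => a.2 = t) = sel.filter (fun a => a.2 = t) := by
      intro t htL
      ext a
      simp only [Finset.mem_filter, hsel', Finset.mem_sdiff]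
      constructor
      · tauto
      · rintro ⟨ha, h2⟩
        refine ⟨⟨ha, fun hPAmem => htL ?_⟩, h2⟩
        have := (mem_of_mem_zip (List.mem_toFinset.1 hPAmem)).2
        rwa [h2] at this
    have huntouched_out : ∀ t, t ∉ L →
        sel'.filter (fun a => a.1 = t) = sel.filter (fun a => a.1 = t) := by
      intro t htL
      ext a
      simp only [Finset.mem_filter, hsel', Finset.mem_sdiff]
      constructor
      · tauto
      · rintro ⟨ha, h2⟩
        refine ⟨⟨ha, fun hPAmem => htL ?_⟩, h2⟩
        have := (mem_of_mem_zip (List.mem_toFinset.1 hPAmem)).1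
        rwa [h2] at this
    -- hypotheses for sel'
    have hflow' : ∀ t : V, t ≠ s → t ≠ w →
        (sel'.filter (fun a => a.2 = t)).card = (sel'.filter (fun a => a.1 = t)).card := by
      intro t hts htw
      by_cases htL : t ∈ L
      · have e1 : sel'.filter (fun a => a.2 = t) = ∅ := by
          rw [Finset.eq_empty_iff_forall_notMem]
          rintro ⟨a1, a2⟩ ha
          rw [Finset.mem_filter] at ha
          exact hint_in t htL hts htw a1 (by rw [← ha.2]; exact ha.1)
        have e2 : sel'.filter (fun a => a.1 = t) = ∅ := by
          rw [Finset.eq_empty_iff_forall_notMem]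
          rintro ⟨a1, a2⟩ ha
          rw [Finset.mem_filter] at ha
          exact hint_out t htL hts htw a2 (by rw [← ha.2]; exact ha.1)
        rw [e1, e2]
      · rw [huntouched_in t htL, huntouched_out t htL]
        exact hflow t hts htw
    have hindeg' : ∀ t : V, t ≠ s → t ≠ w → (sel'.filter (fun a => a.2 = t)).card ≤ 1 :=
      fun t hts htw =>
        le_trans (Finset.card_le_card (Finset.filter_subset_filter _ hsub)) (hindeg t hts htw)
    have hnocycle' : ¬ ∃ (k : ℕ) (f : ℕ → V), 1 ≤ k ∧ f 0 = f k ∧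
        (∀ i ≤ k, f i ≠ s ∧ f i ≠ w) ∧ ∀ i < k, (f i, f (i + 1)) ∈ sel' := by
      rintro ⟨k, f, hk, h0, hi, ha⟩
      exact hnocycle ⟨k, f, hk, h0, hi, fun i hik => hsub (ha i hik)⟩
    have hselA' : sel' ⊆ A := hsub.trans hselA
    have ht1sel : (s, t1) ∈ sel := hPAsub (List.mem_toFinset.2 ht1)
    have hsfilter : sel'.filter (fun a => a.1 = s) =
        (sel.filter (fun a => a.1 = s)).erase (s, t1) := by
      ext ⟨a1, a2⟩
      simp only [Finset.mem_filter, Finset.mem_erase, hsel', Finset.mem_sdiff]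
      constructor
      · rintro ⟨⟨ha, hpa⟩, h1⟩
        refine ⟨?_, ha, h1⟩
        intro he
        rw [he] at hpa
        exact hpa (List.mem_toFinset.2 ht1)
      · rintro ⟨hne, ha, h1⟩
        have h1' : a1 = s := h1
        subst h1'
        refine ⟨⟨ha, fun hpa => hne ?_⟩, rfl⟩
        have ha2 : a2 = t1 := zip_src_inj L hLn a1 a2 t1 (List.mem_toFinset.1 hpa) ht1
        rw [ha2]
    have hmemf : (s, t1) ∈ sel.filter (fun a => a.1 = s) := Finset.mem_filter.2 ⟨ht1sel, rfl⟩
    have hKpos : 1 ≤ K := le_trans (Finset.card_pos.2 ⟨(s, t1), hmemf⟩) hK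
    have hK' : (sel'.filter (fun a => a.1 = s)).card ≤ K - 1 := by
      rw [hsfilter, Finset.card_erase_of_mem hmemf]
      omega
    have hcard' : sel'.card ≤ N := by
      have hnotin : (s, t1) ∉ sel' := by
        rw [hsel', Finset.mem_sdiff]
        push_neg
        intro _
        exact List.mem_toFinset.2 ht1
      have := Finset.card_lt_card ((Finset.ssubset_iff_of_subset hsub).2 ⟨(s, t1), ht1sel, hnotin⟩)
      omega
    obtain ⟨n', P, hn', hprop, hcover, harcdis, hvdis⟩ :=
      ih sel' (K - 1) hcard' hselA' hflow' hindeg' hnocycle' hK'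
    refine ⟨n' + 1, Fin.cons L P, by omega, ?_, ?_, ?_, ?_⟩
    · intro i
      rcases Fin.eq_zero_or_eq_succ i with rfl | ⟨i', rfl⟩
      · rw [Fin.cons_zero]
        exact ⟨hLh, hLl, hLc⟩
      · rw [Fin.cons_succ]
        obtain ⟨p1, p2, p3⟩ := hprop i'
        exact ⟨p1, p2, p3.imp (fun a b hab => hsub hab)⟩
    · intro a ha
      by_cases hpa : a ∈ PA
      · exact ⟨0, by rw [Fin.cons_zero]; exact List.mem_toFinset.1 hpa⟩
      · obtain ⟨i, hi⟩ := hcover a (by rw [hsel', Finset.mem_sdiff]; exact ⟨ha, hpa⟩)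
        exact ⟨i.succ, by rw [Fin.cons_succ]; exact hi⟩
    · intro i j hij a hai haj
      rcases Fin.eq_zero_or_eq_succ i with rfl | ⟨i', rfl⟩
      · rcases Fin.eq_zero_or_eq_succ j with rfl | ⟨j', rfl⟩
        · exact hij rfl
        · rw [Fin.cons_zero] at hai
          rw [Fin.cons_succ] at haj
          have h1 : a ∈ sel' := by
            have := zip_of_chain' (P j') (hprop j').2.2 a haj
            obtain ⟨a1, a2⟩ := a
            exact this
          rw [hsel', Finset.mem_sdiff] at h1
          exact h1.2 (List.mem_toFinset.2 hai)
      · rcases Fin.eq_zero_or_eq_succ j with rfl | ⟨j', rfl⟩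
        · rw [Fin.cons_succ] at hai
          rw [Fin.cons_zero] at haj
          have h1 : a ∈ sel' := by
            have := zip_of_chain' (P i') (hprop i').2.2 a hai
            obtain ⟨a1, a2⟩ := a
            exact this
          rw [hsel', Finset.mem_sdiff] at h1
          exact h1.2 (List.mem_toFinset.2 haj)
        · rw [Fin.cons_succ] at hai haj
          exact harcdis i' j' (fun he => hij (congrArg Fin.succ he)) a hai haj
    · intro i j hij v hvs hvw hvi hvj
      rcases Fin.eq_zero_or_eq_succ i with rfl | ⟨i', rfl⟩
      · rcases Fin.eq_zero_or_eq_succ j with rfl | ⟨j', rfl⟩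
        · exact hij rfl
        · rw [Fin.cons_zero] at hvi
          rw [Fin.cons_succ] at hvj
          obtain ⟨q1, q2, q3⟩ := hprop j'
          obtain ⟨u, hu⟩ := exists_succ_zip hvj q2 hvw
          exact hint_out v hvi hvs hvw u (zip_of_chain' (P j') q3 (v, u) hu)
      · rcases Fin.eq_zero_or_eq_succ j with rfl | ⟨j', rfl⟩
        · rw [Fin.cons_succ] at hvi
          rw [Fin.cons_zero] at hvj
          obtain ⟨q1, q2, q3⟩ := hprop i'
          obtain ⟨u, hu⟩ := exists_succ_zip hvi q2 hvw
          exact hint_out v hvj hvs hvw u (zip_of_chain' (P i') q3 (v, u) hu)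
        · rw [Fin.cons_succ] at hvi hvj
          exact hvdis i' j' (fun he => hij (congrArg Fin.succ he)) v hvs hvw hvi hvj


end RouteAux

/-- Route extraction from the ATHN MIP solution: a 0/1 arc selection satisfying flow
conservation at task vertices, in-degree at most one at task vertices, no directed
cycle among task vertices, and at most `K` selected out-arcs at the source,
decomposes into at most `K` arc-disjoint source-sink paths covering pairwise
disjoint sets of task vertices. -/
theorem route_decomposition {V : Type*} [Fintype V] [DecidableEq V]
    (s w : V) (hsw : s ≠ w)
    (A : Finset (V × V)) (sel : Finset (V × V)) (hselA : sel ⊆ A)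
    (hs_in : ∀ a ∈ A, a.2 ≠ s)   -- the source has only out-arcs
    (hw_out : ∀ a ∈ A, a.1 ≠ w)  -- the sink has only in-arcs
    (K : ℕ)
    (hflow : ∀ t : V, t ≠ s → t ≠ w →
      (sel.filter (fun a => a.2 = t)).card = (sel.filter (fun a => a.1 = t)).card)
    (hindeg : ∀ t : V, t ≠ s → t ≠ w → (sel.filter (fun a => a.2 = t)).card ≤ 1)
    (hnocycle : ¬ ∃ (k : ℕ) (f : ℕ → V), 1 ≤ k ∧ f 0 = f k ∧
      (∀ i ≤ k, f i ≠ s ∧ f i ≠ w) ∧ ∀ i < k, (f i, f (i + 1)) ∈ sel)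
    (hK : (sel.filter (fun a => a.1 = s)).card ≤ K) :
    ∃ (n : ℕ) (P : Fin n → List V), n ≤ K ∧
      (∀ i, (P i).head? = some s ∧ (P i).getLast? = some w ∧
        (P i).Chain' (fun u v => (u, v) ∈ sel)) ∧
      (∀ a ∈ sel, ∃ i, a ∈ (P i).zip (P i).tail) ∧
      (∀ i j, i ≠ j → ∀ a ∈ (P i).zip (P i).tail, a ∉ (P j).zip (P j).tail) ∧
      (∀ i j, i ≠ j → ∀ v, v ≠ s → v ≠ w → v ∈ P i → v ∉ P j) := by
  exact RouteAux.main_aux s w hsw A hs_in hw_out sel.card sel K le_rfl hselA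
    hflow hindeg hnocycle hK
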